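/- arXiv:1003.3067 — 2 statements merged into one kernel-verified Lean document; each statement's English description precedes it below -/
import Mathlib

section
/- Let N : X → Y be a compact injective bounded linear operator between Hilbert spaces with dense range, and let y ∈ Y be not in the range of N. Then for any sequence of Tikhonov-regularized solutions x_δ = (δ I + N* N)^{-1} N* y with δ → 0⁺, the norms ‖x_δ‖ tend to infinity. -/
/-!
If `‖x_δ‖` stayed bounded along some `δ_j → 0`, the sequence would converge: for
`δ ≤ δ'` positivity of `N* N` gives `‖x_δ - x_δ'‖² ≤ ‖x_δ‖² - ‖x_δ'‖²`, so `‖x_δ‖²` increases as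
`δ` decreases and a bounded family is Cauchy. Its limit `z` solves `N* N z = N* y`, and since `N*`
is injective when `N` has dense range, `N z = y`, contradicting `y ∉ range N`.
-/

open Filter Topology
open scoped InnerProductSpace

section

open RCLike

variable {𝕜 E F : Type*} [RCLike 𝕜]
  [NormedAddCommGroup E] [InnerProductSpace 𝕜 E] [NormedAddCommGroup F] [InnerProductSpace 𝕜 F]

theorem norm_sub_sq_le_of_regularized {T : E →L[𝕜] E} (hT : ∀ v, 0 ≤ re ⟪T v, v⟫_𝕜)
    {α β : ℝ} {u v b : E} (hα : 0 < α) (hαβ : α ≤ β)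
    (hu : (α : 𝕜) • u + T u = b) (hv : (β : 𝕜) • v + T v = b) :
    ‖u - v‖ ^ 2 ≤ ‖u‖ ^ 2 - ‖v‖ ^ 2 := by
  set d := u - v
  have hd : (α : 𝕜) • d + T d = ((β - α : ℝ) : 𝕜) • v := by
    rw [← sub_eq_zero, ← sub_eq_zero.mpr (hu.trans hv.symm)]
    simp only [d, map_sub, smul_sub, sub_smul]
    abel
  have hre : α * ‖d‖ ^ 2 + re ⟪T d, d⟫_𝕜 = (β - α) * re ⟪v, d⟫_𝕜 := by
    have h := congrArg (fun w => re ⟪w, d⟫_𝕜) hd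
    simpa only [inner_add_left, inner_smul_real_left, map_add, smul_re,
      inner_self_eq_norm_sq] using h
  have hvd : 0 ≤ re ⟪v, d⟫_𝕜 := by
    rcases hαβ.eq_or_lt with rfl | hlt
    · have hd0 : ‖d‖ ^ 2 = 0 := by nlinarith [hT d, sq_nonneg ‖d‖]
      simp [show d = 0 by simpa using hd0]
    · nlinarith [hT d, sq_nonneg ‖d‖]
  have hnorm : ‖u‖ ^ 2 = ‖v‖ ^ 2 + 2 * re ⟪v, d⟫_𝕜 + ‖d‖ ^ 2 := by
    rw [← norm_add_sq, add_sub_cancel]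
  linarith

theorem cauchySeq_of_norm_sub_sq_le {G : Type*} [SeminormedAddCommGroup G] {δ : ℕ → ℝ}
    {x : ℕ → G} {C : ℝ} (hδpos : ∀ j, 0 < δ j) (hδ : Tendsto δ atTop (𝓝 0))
    (hC : ∀ k, ‖x k‖ ≤ C) (hx : ∀ i j, δ i ≤ δ j → ‖x i - x j‖ ^ 2 ≤ ‖x i‖ ^ 2 - ‖x j‖ ^ 2) :
    CauchySeq x := by
  have hbdd : BddAbove (Set.range fun k => ‖x k‖ ^ 2) :=
    ⟨C ^ 2, by rintro _ ⟨k, rfl⟩; exact pow_le_pow_left₀ (norm_nonneg _) (hC k) 2⟩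
  set s := ⨆ k, ‖x k‖ ^ 2
  have hmono : ∀ i j, δ i ≤ δ j → ‖x j‖ ^ 2 ≤ ‖x i‖ ^ 2 := fun i j h => by
    linarith [hx i j h, sq_nonneg ‖x i - x j‖]
  rw [Metric.cauchySeq_iff]
  intro ε hε
  obtain ⟨k₀, hk₀⟩ : ∃ k₀, s - ε ^ 2 < ‖x k₀‖ ^ 2 :=
    exists_lt_of_lt_ciSup (sub_lt_self s (by positivity))
  obtain ⟨K, hK⟩ := eventually_atTop.mp (hδ.eventually_lt_const (hδpos k₀))
  have hclose : ∀ m n, K ≤ m → K ≤ n → δ m ≤ δ n → dist (x m) (x n) < ε := by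
    intro m n hm hn hmn
    have h : ‖x m - x n‖ ^ 2 < ε ^ 2 := by
      linarith [hx m n hmn, le_ciSup hbdd m, hmono n k₀ (hK n hn).le]
    rw [dist_eq_norm]
    exact lt_of_pow_lt_pow_left₀ 2 hε.le h
  refine ⟨K, fun m hm n hn => ?_⟩
  rcases le_total (δ m) (δ n) with h | h
  · exact hclose m n hm hn h
  · exact dist_comm (x m) (x n) ▸ hclose n m hn hm h

theorem apply_eq_of_tendsto_regularized {T : E →L[𝕜] E} {δ : ℕ → ℝ} {x : ℕ → E} {b z : E}
    (hδ : Tendsto δ atTop (𝓝 0)) (hxz : Tendsto x atTop (𝓝 z))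
    (hx : ∀ j, (δ j : 𝕜) • x j + T (x j) = b) :
    T z = b := by
  have h : Tendsto (fun j => (δ j : 𝕜) • x j + T (x j)) atTop (𝓝 (((0 : ℝ) : 𝕜) • z + T z)) :=
    (((continuous_ofReal.tendsto 0).comp hδ).smul hxz).add ((T.continuous.tendsto z).comp hxz)
  simp only [hx, ofReal_zero, zero_smul, zero_add] at h
  exact tendsto_nhds_unique h tendsto_const_nhds

theorem ContinuousLinearMap.adjoint_injective_of_denseRange [CompleteSpace E] [CompleteSpace F]
    {N : E →L[𝕜] F} (hN : DenseRange N) : Function.Injective N.adjoint := by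
  intro u v huv
  rw [← sub_eq_zero]
  refine hN.eq_zero_of_inner_left 𝕜 fun w => ?_
  rw [← ContinuousLinearMap.adjoint_inner_left, map_sub, huv, sub_self, inner_zero_left]

end

theorem tikhonov_blowup_general
    {X Y : Type*} [NormedAddCommGroup X] [InnerProductSpace ℂ X] [CompleteSpace X]
    [NormedAddCommGroup Y] [InnerProductSpace ℂ Y] [CompleteSpace Y]
    (N : X →L[ℂ] Y) (hdense : DenseRange N)
    (y : Y) (hy : y ∉ Set.range N)
    (δ : ℕ → ℝ) (hδpos : ∀ j, 0 < δ j) (hδ : Tendsto δ atTop (nhds 0))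
    (x : ℕ → X)
    (hx : ∀ j, (δ j : ℂ) • x j + N.adjoint (N (x j)) = N.adjoint y) :
    Tendsto (fun j => ‖x j‖) atTop atTop := by
  by_contra hunbdd
  obtain ⟨C, hC⟩ : ∃ C, ∃ᶠ j in atTop, ‖x j‖ < C := by
    simpa [tendsto_atTop, frequently_atTop] using hunbdd
  obtain ⟨φ, hφ, hCφ⟩ := extraction_of_frequently_atTop hC
  have hδφ : Tendsto (δ ∘ φ) atTop (𝓝 0) := hδ.comp hφ.tendsto_atTop
  have hcauchy : CauchySeq (x ∘ φ) :=
    cauchySeq_of_norm_sub_sq_le (fun k => hδpos (φ k)) hδφ (fun k => (hCφ k).le) fun i j hij =>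
      norm_sub_sq_le_of_regularized N.isPositive_adjoint_comp_self.re_inner_nonneg_left
        (hδpos _) hij (hx (φ i)) (hx (φ j))
  obtain ⟨z, hz⟩ := cauchySeq_tendsto_of_complete hcauchy
  have hnormal : N.adjoint (N z) = N.adjoint y :=
    apply_eq_of_tendsto_regularized (T := N.adjoint ∘L N) hδφ hz fun k => hx (φ k)
  exact hy ⟨z, N.adjoint_injective_of_denseRange hdense hnormal⟩

/-- Blow-up of Tikhonov-regularized solutions: let `N : X → Y` be a compact,
injective bounded linear operator between complex Hilbert spaces with dense
range, and let `y ∉ range N`. If `δ_j → 0⁺` and `x_j` solves the regularized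
normal equation `δ_j x_j + N* N x_j = N* y`, then `‖x_j‖ → ∞`. -/
theorem tikhonov_blowup
    {X Y : Type*} [NormedAddCommGroup X] [InnerProductSpace ℂ X] [CompleteSpace X]
    [NormedAddCommGroup Y] [InnerProductSpace ℂ Y] [CompleteSpace Y]
    (N : X →L[ℂ] Y) (hcomp : IsCompactOperator N)
    (hinj : Function.Injective N) (hdense : DenseRange N)
    (y : Y) (hy : y ∉ Set.range N)
    (δ : ℕ → ℝ) (hδpos : ∀ j, 0 < δ j) (hδ : Tendsto δ atTop (nhds 0))
    (x : ℕ → X)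
    (hx : ∀ j, (δ j : ℂ) • x j + N.adjoint (N (x j)) = N.adjoint y) :
    Tendsto (fun j => ‖x j‖) atTop atTop :=
  tikhonov_blowup_general N hdense y hy δ hδpos hδ x hx
end

section
/- The difference G(x,y) − conj(G(y,x)) of the quasi-periodic Green function and the conjugate of its transpose, for y₃ = b fixed and x₃ < b, equals the finite sum over propagating modes (|αₙ| ≤ k) of (1/(8π² i βₙ))[exp(i(αₙ·(x'−y') − βₙ(y₃−x₃))) + exp(i(αₙ·(x'−y') + βₙ(y₃−x₃)))]. -/
/-!
On the plane `y₃ = b` with `x₃ < b`, both `G(x,y)` and `G(y,x)` are Rayleigh series in the same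
depth `t = b - x₃ > 0`, and the phases of `G(y,x)` are the negatives of those of `G(x,y)`.
Conjugating a mode of `G(y,x)` therefore gives the corresponding mode of `G(x,y)` with `β`
replaced by `-conj β`. For an evanescent mode (`β` purely imaginary) this is the same mode, so it
cancels in the difference; for a propagating mode (`β` real) it is `-(1/(iβ)) exp(iθ - iβt)`,
which leaves the two exponentials of the claim.
-/

open Complex Real ComplexConjugate

theorem conj_inv_I_mul_exp_of_re_eq_zero {β : ℂ} (hβ : β.re = 0) (θ t : ℝ) :
    conj (1 / (I * β) * exp (I * ((-θ : ℝ) : ℂ) + I * β * (t : ℂ))) =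
      1 / (I * β) * exp (I * (θ : ℂ) + I * β * (t : ℂ)) := by
  have hconj : conj β = -β := Complex.ext (by simp [hβ]) (by simp)
  simp only [map_mul, map_div₀, map_one, map_add, ← exp_conj, conj_I, conj_ofReal, hconj]
  congr 2 <;> push_cast <;> ring

theorem conj_inv_I_mul_exp_of_im_eq_zero {β : ℂ} (hβ : β.im = 0) (θ t : ℝ) :
    conj (1 / (I * β) * exp (I * ((-θ : ℝ) : ℂ) + I * β * (t : ℂ))) =
      -(1 / (I * β) * exp (I * (θ : ℂ) - I * β * (t : ℂ))) := by
  have hconj : conj β = β := conj_eq_iff_im.mpr hβ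
  simp only [map_mul, map_div₀, map_one, map_add, ← exp_conj, conj_I, conj_ofReal, hconj]
  have hexp : exp (-I * ((-θ : ℝ) : ℂ) + -I * β * (t : ℂ)) = exp (I * θ - I * β * t) := by
    congr 1; push_cast; ring
  rw [hexp]; ring

theorem tsum_sub_conj_tsum_eq_sum {ι : Type*} {f g : ι → ℂ} (hf : Summable f) (hg : Summable g)
    (s : Finset ι) (hs : ∀ n ∉ s, conj (g n) = f n) :
    ∑' n, f n - conj (∑' n, g n) = ∑ n ∈ s, (f n - conj (g n)) := by
  rw [Complex.conj_tsum, ← hf.tsum_sub (Complex.summable_conj.mpr hg)]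
  exact tsum_eq_sum fun n hn => sub_eq_zero.mpr (hs n hn).symm

theorem green_difference_propagating_general
    (k : ℝ) (α : ℝ × ℝ) (β : ℤ × ℤ → ℂ)
    (hne : ∀ n : ℤ × ℤ, (α.1 + (n.1 : ℝ)) ^ 2 + (α.2 + (n.2 : ℝ)) ^ 2 ≠ k ^ 2)
    (hprop : ∀ n : ℤ × ℤ, (α.1 + (n.1 : ℝ)) ^ 2 + (α.2 + (n.2 : ℝ)) ^ 2 < k ^ 2 →
      (β n).im = 0 ∧ 0 < (β n).re)
    (hev : ∀ n : ℤ × ℤ, k ^ 2 < (α.1 + (n.1 : ℝ)) ^ 2 + (α.2 + (n.2 : ℝ)) ^ 2 →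
      (β n).re = 0 ∧ 0 < (β n).im)
    (G : (ℝ × ℝ) × ℝ → (ℝ × ℝ) × ℝ → ℂ)
    (hG : ∀ x y : (ℝ × ℝ) × ℝ, G x y = (1 / (8 * (π : ℂ) ^ 2)) *
      ∑' n : ℤ × ℤ, (1 / (Complex.I * β n)) *
        Complex.exp (Complex.I *
            (((α.1 + (n.1 : ℝ)) * (x.1.1 - y.1.1) + (α.2 + (n.2 : ℝ)) * (x.1.2 - y.1.2) : ℝ) : ℂ)
          + Complex.I * β n * ((|x.2 - y.2| : ℝ) : ℂ)))
    (b : ℝ) (x y : (ℝ × ℝ) × ℝ) (hx : x.2 < b) (hy : y.2 = b)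
    (hsum1 : Summable (fun n : ℤ × ℤ => (1 / (Complex.I * β n)) *
        Complex.exp (Complex.I *
            (((α.1 + (n.1 : ℝ)) * (x.1.1 - y.1.1) + (α.2 + (n.2 : ℝ)) * (x.1.2 - y.1.2) : ℝ) : ℂ)
          + Complex.I * β n * ((|x.2 - y.2| : ℝ) : ℂ))))
    (hsum2 : Summable (fun n : ℤ × ℤ => (1 / (Complex.I * β n)) *
        Complex.exp (Complex.I *
            (((α.1 + (n.1 : ℝ)) * (y.1.1 - x.1.1) + (α.2 + (n.2 : ℝ)) * (y.1.2 - x.1.2) : ℝ) : ℂ)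
          + Complex.I * β n * ((|y.2 - x.2| : ℝ) : ℂ))))
    (hfin : Set.Finite {n : ℤ × ℤ |
      (α.1 + (n.1 : ℝ)) ^ 2 + (α.2 + (n.2 : ℝ)) ^ 2 < k ^ 2}) :
    G x y - (starRingEnd ℂ) (G y x) =
      ∑ n ∈ hfin.toFinset, (1 / (8 * (π : ℂ) ^ 2 * Complex.I * β n)) *
        (Complex.exp (Complex.I *
              (((α.1 + (n.1 : ℝ)) * (x.1.1 - y.1.1) + (α.2 + (n.2 : ℝ)) * (x.1.2 - y.1.2) : ℝ) : ℂ)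
            - Complex.I * β n * ((b - x.2 : ℝ) : ℂ)) +
         Complex.exp (Complex.I *
              (((α.1 + (n.1 : ℝ)) * (x.1.1 - y.1.1) + (α.2 + (n.2 : ℝ)) * (x.1.2 - y.1.2) : ℝ) : ℂ)
            + Complex.I * β n * ((b - x.2 : ℝ) : ℂ))) := by
  have hdepth : |x.2 - y.2| = b - x.2 := by rw [hy, abs_sub_comm, abs_of_pos (sub_pos.2 hx)]
  have hdepth' : |y.2 - x.2| = b - x.2 := by rw [abs_sub_comm, hdepth]
  have hphase : ∀ n : ℤ × ℤ,
      (α.1 + (n.1 : ℝ)) * (y.1.1 - x.1.1) + (α.2 + (n.2 : ℝ)) * (y.1.2 - x.1.2) =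
        -((α.1 + (n.1 : ℝ)) * (x.1.1 - y.1.1) + (α.2 + (n.2 : ℝ)) * (x.1.2 - y.1.2)) :=
    fun n => by ring
  have hconst : conj (1 / (8 * (π : ℂ) ^ 2)) = 1 / (8 * (π : ℂ) ^ 2) := by
    simp only [map_div₀, map_one, map_mul, map_pow, conj_ofReal, map_ofNat]
  rw [hG x y, hG y x, map_mul, hconst, ← mul_sub,
    tsum_sub_conj_tsum_eq_sum hsum1 hsum2 hfin.toFinset, Finset.mul_sum]
  · refine Finset.sum_congr rfl fun n hn => ?_
    have hβ := (hprop n (hfin.mem_toFinset.mp hn)).1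
    rw [hdepth', hphase, conj_inv_I_mul_exp_of_im_eq_zero hβ, hdepth]
    ring
  · intro n hn
    have hevanescent : k ^ 2 < (α.1 + (n.1 : ℝ)) ^ 2 + (α.2 + (n.2 : ℝ)) ^ 2 :=
      (not_lt.mp (mt hfin.mem_toFinset.mpr hn)).lt_of_ne' (hne n)
    rw [hdepth', hphase, conj_inv_I_mul_exp_of_re_eq_zero (hev n hevanescent).1, hdepth]

/-- The difference `G(x,y) − conj(G(y,x))` of the quasi-periodic Green function
`G(x,y) = (1/(8π²)) ∑_n (1/(iβₙ)) exp(iαₙ·(x'−y') + iβₙ|x₃−y₃|)` and the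
conjugate of its transpose, for `y₃ = b` and `x₃ < b`, equals the finite sum over
propagating modes `|αₙ| < k` of
`(1/(8π² i βₙ))[exp(i(αₙ·(x'−y') − βₙ(b−x₃))) + exp(i(αₙ·(x'−y') + βₙ(b−x₃)))]`. -/
theorem green_difference_propagating
    (k : ℝ) (hk : 0 < k) (α : ℝ × ℝ) (β : ℤ × ℤ → ℂ)
    (hne : ∀ n : ℤ × ℤ, (α.1 + (n.1 : ℝ)) ^ 2 + (α.2 + (n.2 : ℝ)) ^ 2 ≠ k ^ 2)
    (hprop : ∀ n : ℤ × ℤ, (α.1 + (n.1 : ℝ)) ^ 2 + (α.2 + (n.2 : ℝ)) ^ 2 < k ^ 2 →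
      (β n).im = 0 ∧ 0 < (β n).re)
    (hev : ∀ n : ℤ × ℤ, k ^ 2 < (α.1 + (n.1 : ℝ)) ^ 2 + (α.2 + (n.2 : ℝ)) ^ 2 →
      (β n).re = 0 ∧ 0 < (β n).im)
    (G : (ℝ × ℝ) × ℝ → (ℝ × ℝ) × ℝ → ℂ)
    (hG : ∀ x y : (ℝ × ℝ) × ℝ, G x y = (1 / (8 * (π : ℂ) ^ 2)) *
      ∑' n : ℤ × ℤ, (1 / (Complex.I * β n)) *
        Complex.exp (Complex.I *
            (((α.1 + (n.1 : ℝ)) * (x.1.1 - y.1.1) + (α.2 + (n.2 : ℝ)) * (x.1.2 - y.1.2) : ℝ) : ℂ)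
          + Complex.I * β n * ((|x.2 - y.2| : ℝ) : ℂ)))
    (b : ℝ) (x y : (ℝ × ℝ) × ℝ) (hx : x.2 < b) (hy : y.2 = b)
    (hsum1 : Summable (fun n : ℤ × ℤ => (1 / (Complex.I * β n)) *
        Complex.exp (Complex.I *
            (((α.1 + (n.1 : ℝ)) * (x.1.1 - y.1.1) + (α.2 + (n.2 : ℝ)) * (x.1.2 - y.1.2) : ℝ) : ℂ)
          + Complex.I * β n * ((|x.2 - y.2| : ℝ) : ℂ))))
    (hsum2 : Summable (fun n : ℤ × ℤ => (1 / (Complex.I * β n)) *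
        Complex.exp (Complex.I *
            (((α.1 + (n.1 : ℝ)) * (y.1.1 - x.1.1) + (α.2 + (n.2 : ℝ)) * (y.1.2 - x.1.2) : ℝ) : ℂ)
          + Complex.I * β n * ((|y.2 - x.2| : ℝ) : ℂ))))
    (hfin : Set.Finite {n : ℤ × ℤ |
      (α.1 + (n.1 : ℝ)) ^ 2 + (α.2 + (n.2 : ℝ)) ^ 2 < k ^ 2}) :
    G x y - (starRingEnd ℂ) (G y x) =
      ∑ n ∈ hfin.toFinset, (1 / (8 * (π : ℂ) ^ 2 * Complex.I * β n)) *
        (Complex.exp (Complex.I *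
              (((α.1 + (n.1 : ℝ)) * (x.1.1 - y.1.1) + (α.2 + (n.2 : ℝ)) * (x.1.2 - y.1.2) : ℝ) : ℂ)
            - Complex.I * β n * ((b - x.2 : ℝ) : ℂ)) +
         Complex.exp (Complex.I *
              (((α.1 + (n.1 : ℝ)) * (x.1.1 - y.1.1) + (α.2 + (n.2 : ℝ)) * (x.1.2 - y.1.2) : ℝ) : ℂ)
            + Complex.I * β n * ((b - x.2 : ℝ) : ℂ))) :=
  green_difference_propagating_general k α β hne hprop hev G hG b x y hx hy hsum1 hsum2 hfin
end
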